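/- arXiv:1205.4941 — 3 statements merged into one kernel-verified Lean document; each statement's English description precedes it below -/
import Mathlib

section
/- (Sufficiency of the Karush–Kuhn–Tucker conditions for state reconstruction.) Let B_1, …, B_m be Hermitian d×d complex matrices, let ρ(x) := (1/d)·I + ∑_{i=1}^m x_i B_i for x ∈ ℝ^m, and let F : ℝ^m → ℝ be convex and differentiable at x*. Suppose ρ(x*) is positive semidefinite and there exists a positive semidefinite Hermitian matrix Λ such that (∂F/∂x_i)(x*) = Re tr(Λ B_i) for all i and Re tr(Λ ρ(x*)) = 0. Then x* is a global minimizer of F over the feasible set: F(x*) ≤ F(x) for every x ∈ ℝ^m with ρ(x) positive semidefinite. -/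
open Matrix ComplexOrder

lemma psd_trace_re_nonneg {d : ℕ} {M : Matrix (Fin d) (Fin d) ℂ} (hM : M.PosSemidef) :
    0 ≤ M.trace.re := by
  have h : ∀ j, 0 ≤ (M j j).re := by
    intro j
    have := hM.dotProduct_mulVec_nonneg (Pi.single j 1)
    have hd : star (Pi.single j 1) ⬝ᵥ M *ᵥ (Pi.single j 1) = M j j := by
      simp [mulVec, dotProduct, Pi.single_apply, apply_ite]
    rw [hd] at this
    exact (Complex.le_def.mp this).1
  rw [Matrix.trace, Complex.re_sum]
  exact Finset.sum_nonneg fun j _ => h j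

lemma trace_mul_psd_re_nonneg {d : ℕ} {A B : Matrix (Fin d) (Fin d) ℂ}
    (hA : A.PosSemidef) (hB : B.PosSemidef) : 0 ≤ (A * B).trace.re := by
  open scoped MatrixOrder in
  have hS : CFC.sqrt A * CFC.sqrt A = A := CFC.sqrt_mul_sqrt_self A hA.nonneg
  open scoped MatrixOrder in
  have h1 : (A * B).trace = ((CFC.sqrt A)ᴴ * B * CFC.sqrt A).trace := by
    conv_rhs => rw [(CFC.sqrt_nonneg A).posSemidef.1.eq]
    rw [Matrix.trace_mul_cycle, hS]
  rw [h1]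
  exact psd_trace_re_nonneg (hB.conjTranspose_mul_mul_same _)

/-- **Sufficiency of the Karush–Kuhn–Tucker conditions for state reconstruction.**
With `ρ(x) = (1/d)·I + ∑ i, x i • B i` for Hermitian matrices `B i`, a convex fit
function `F` differentiable at `x*`, a feasible point `ρ(x*) ⪰ 0`, and a positive
semidefinite Lagrange multiplier `Λ` satisfying the gradient condition
`∂F/∂x_i (x*) = Re tr(Λ B_i)` and the complementary slackness `Re tr(Λ ρ(x*)) = 0`,
the point `x*` is a global minimizer of `F` over the feasible set. -/
theorem kkt_sufficiency (d m : ℕ)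
    (B : Fin m → Matrix (Fin d) (Fin d) ℂ) (hB : ∀ i, (B i).IsHermitian)
    (ρ : (Fin m → ℝ) → Matrix (Fin d) (Fin d) ℂ)
    (hρ : ρ = fun x => ((d : ℂ))⁻¹ • (1 : Matrix (Fin d) (Fin d) ℂ) +
      ∑ i, ((x i : ℝ) : ℂ) • B i)
    (F : (Fin m → ℝ) → ℝ) (hF : ConvexOn ℝ Set.univ F)
    (xstar : Fin m → ℝ)
    (φ : (Fin m → ℝ) →L[ℝ] ℝ) (hdiff : HasFDerivAt F φ xstar)
    (hfeas : (ρ xstar).PosSemidef)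
    (Λ : Matrix (Fin d) (Fin d) ℂ) (hΛ : Λ.PosSemidef)
    (hgrad : ∀ i, φ (Pi.single i 1) = (Λ * B i).trace.re)
    (hslack : (Λ * ρ xstar).trace.re = 0) :
    ∀ x : Fin m → ℝ, (ρ x).PosSemidef → F xstar ≤ F x := by
  intro x hx
  set v : Fin m → ℝ := x - xstar with hv
  -- Step 1: first-order convexity inequality  φ v ≤ F x - F xstar
  have hkey : φ v ≤ F x - F xstar := by
    set g : ℝ → ℝ := fun t => F (xstar + t • v) with hg
    have hgconv : ConvexOn ℝ Set.univ g := by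
      have h := hF.comp_affineMap (AffineMap.lineMap xstar x)
      have he : g = F ∘ (AffineMap.lineMap xstar x) := by
        funext t
        simp [hg, AffineMap.lineMap_apply, hv, add_comm]
      rw [he]
      simpa using h
    have hcurve : HasDerivAt (fun t : ℝ => xstar + t • v) v 0 := by
      simpa using ((hasDerivAt_id (0 : ℝ)).smul_const v).const_add xstar
    have hgder : HasDerivAt g (φ v) 0 := by
      have h0 : xstar + (0 : ℝ) • v = xstar := by simp
      have := hdiff
      rw [← h0] at this
      exact this.comp_hasDerivAt 0 hcurve
    have := hgconv.le_slope_of_hasDerivAt (Set.mem_univ (0 : ℝ)) (Set.mem_univ (1 : ℝ))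
      zero_lt_one hgder
    have hslope : slope g 0 1 = F x - F xstar := by
      simp [slope_def_field, hg, hv]
    rw [hslope] at this
    exact this
  -- Step 2: φ v = Re tr(Λ (ρ x - ρ xstar)) ≥ 0
  have hφv : φ v = (Λ * ρ x).trace.re - (Λ * ρ xstar).trace.re := by
    have hvsum : v = ∑ i, v i • (Pi.single i 1 : Fin m → ℝ) := by
      funext j
      simp [Pi.single_apply, Finset.sum_ite_eq', mul_comm]
    have h1 : φ v = ∑ i, v i * (Λ * B i).trace.re := by
      conv_lhs => rw [hvsum]
      rw [map_sum]
      simp [hgrad]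
    have h2 : ρ x - ρ xstar = ∑ i, ((v i : ℝ) : ℂ) • B i := by
      simp only [hρ, hv]
      rw [add_sub_add_left_eq_sub, ← Finset.sum_sub_distrib]
      refine Finset.sum_congr rfl fun i _ => ?_
      rw [← sub_smul, Pi.sub_apply]
      push_cast
      ring_nf
    have h3 : (Λ * (ρ x - ρ xstar)).trace = ∑ i, ((v i : ℝ) : ℂ) * (Λ * B i).trace := by
      rw [h2, Finset.mul_sum]
      simp [Matrix.mul_smul, Matrix.trace_smul, smul_eq_mul]
    have h4 : (Λ * (ρ x - ρ xstar)).trace.re = ∑ i, v i * (Λ * B i).trace.re := by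
      rw [h3, Complex.re_sum]
      congr 1
      funext i
      exact Complex.re_ofReal_mul _ _
    rw [h1, ← h4, Matrix.mul_sub, Matrix.trace_sub, Complex.sub_re]
  have hnn : 0 ≤ φ v := by
    rw [hφv, hslack, sub_zero]
    exact trace_mul_psd_re_nonneg hΛ hx
  linarith
end

section
/- (Accuracy of the barrier method.) Let B_1, …, B_m be Hermitian d×d complex matrices, let ρ(x) := (1/d)·I + ∑_{i=1}^m x_i B_i for x ∈ ℝ^m, let F : ℝ^m → ℝ be convex and differentiable at every point of the open set {x : ρ(x) positive definite}, and let t > 0. Suppose x_t is a point with ρ(x_t) positive definite that minimizes the barrier objective f_t(x) := F(x) − t·log(Re det ρ(x)) over {x : ρ(x) positive definite}. Then for every x ∈ ℝ^m with ρ(x) positive semidefinite, F(x_t) ≤ F(x) + t·d. -/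
open Matrix ComplexOrder

lemma myPosDef_smul {n : ℕ} {A : Matrix (Fin n) (Fin n) ℂ} (hA : A.PosDef)
    {c : ℝ} (hc : 0 < c) : (((c:ℂ)) • A).PosDef := by
  refine ⟨?_, fun x hx => ?_⟩
  · unfold Matrix.IsHermitian
    rw [conjTranspose_smul, hA.1.eq]
    simp
  · exact (hA.smul (show (0:ℂ) < c by exact_mod_cast hc)).2 hx

lemma myPosSemidef_smul {n : ℕ} {A : Matrix (Fin n) (Fin n) ℂ} (hA : A.PosSemidef)
    {c : ℝ} (hc : 0 ≤ c) : (((c:ℂ)) • A).PosSemidef := by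
  refine ⟨?_, fun x => ?_⟩
  · unfold Matrix.IsHermitian
    rw [conjTranspose_smul, hA.1.eq]
    simp
  · exact (hA.smul (show (0:ℂ) ≤ c by exact_mod_cast hc)).2 x

lemma myOne_le_det_re_one_add {n : ℕ} {M : Matrix (Fin n) (Fin n) ℂ} (hM : M.PosSemidef) :
    1 ≤ (1 + M).det.re := by
  have hH : (1 + M).IsHermitian := (isHermitian_one).add hM.1
  have heig : ∀ i, 1 ≤ hH.eigenvalues i := by
    intro i
    rw [hH.eigenvalues_eq]
    set v := (hH.eigenvectorBasis i : EuclideanSpace ℂ (Fin n))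
    have h1 : star (⇑v) ⬝ᵥ ((1 + M) *ᵥ ⇑v) = star (⇑v) ⬝ᵥ ⇑v + star (⇑v) ⬝ᵥ (M *ᵥ ⇑v) := by
      rw [add_mulVec, one_mulVec, dotProduct_add]
    rw [h1, map_add]
    have h2 : RCLike.re (star (⇑v) ⬝ᵥ ⇑v) = 1 := by
      rw [dotProduct_comm, ← EuclideanSpace.inner_eq_star_dotProduct, inner_self_eq_norm_sq_to_K]
      have := hH.eigenvectorBasis.orthonormal.1 i
      rw [show ‖v‖ = 1 from this]
      simp
    rw [h2]
    have h3 := hM.re_dotProduct_nonneg (⇑v)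
    linarith
  have hdet : (1 + M).det = ((∏ i, hH.eigenvalues i : ℝ) : ℂ) := by
    rw [hH.det_eq_prod_eigenvalues]
    push_cast
    rfl
  rw [hdet, Complex.ofReal_re]
  simpa using Finset.prod_le_prod (fun i _ => zero_le_one) (fun i _ => heig i)

open scoped MatrixOrder in
lemma myDet_re_le {n : ℕ} {A C : Matrix (Fin n) (Fin n) ℂ}
    (hA : A.PosDef) (hC : C.PosSemidef) : A.det.re ≤ (A + C).det.re := by
  set S := CFC.sqrt A with hSdef
  have hSS : S * S = A := CFC.sqrt_mul_sqrt_self A hA.posSemidef.nonneg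
  have hSH : S.IsHermitian := (CFC.sqrt_nonneg A).posSemidef.1
  have hdetS : IsUnit S.det := by
    have h : S.det * S.det = A.det := by rw [← det_mul, hSS]
    have : A.det ≠ 0 := hA.det_pos.ne'
    exact isUnit_iff_ne_zero.mpr (fun h0 => this (by rw [← h, h0, mul_zero]))
  have hMpsd : (S⁻¹ * C * S⁻¹).PosSemidef := by
    have := hC.conjTranspose_mul_mul_same S⁻¹
    rwa [conjTranspose_nonsing_inv, hSH.eq] at this
  have hdecomp : A + C = S * (1 + (S⁻¹ * C * S⁻¹)) * S := by
    rw [mul_add, mul_one, add_mul, hSS]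
    congr 1
    rw [← Matrix.mul_assoc, ← Matrix.mul_assoc, Matrix.mul_nonsing_inv _ hdetS, one_mul,
      Matrix.mul_assoc, Matrix.nonsing_inv_mul _ hdetS, mul_one]
  -- dets as reals
  have hSr : S.det = ((∏ i, hSH.eigenvalues i : ℝ) : ℂ) := by
    rw [hSH.det_eq_prod_eigenvalues]; push_cast; rfl
  set r : ℝ := ∏ i, hSH.eigenvalues i
  have hr : 0 ≤ r := Finset.prod_nonneg fun i _ => (CFC.sqrt_nonneg A).posSemidef.eigenvalues_nonneg i
  have hDpd : (1 + (S⁻¹ * C * S⁻¹)).PosDef := Matrix.PosDef.add_posSemidef Matrix.PosDef.one hMpsd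
  have hDr : (1 + (S⁻¹ * C * S⁻¹)).det = (((1 + (S⁻¹ * C * S⁻¹)).det.re : ℝ) : ℂ) := by
    have h := hDpd.det_pos
    rw [Complex.lt_def] at h
    exact Complex.ext (by simp) (by simp [← h.2])
  set D : ℝ := (1 + (S⁻¹ * C * S⁻¹)).det.re
  have hD1 : 1 ≤ D := myOne_le_det_re_one_add hMpsd
  have hAre : A.det = ((r * r : ℝ) : ℂ) := by rw [← hSS, det_mul, hSr]; push_cast; ring
  have hACre : (A + C).det = ((r * D * r : ℝ) : ℂ) := by
    rw [hdecomp, det_mul, det_mul, hSr, hDr]; push_cast; ring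
  rw [hAre, hACre, Complex.ofReal_re, Complex.ofReal_re]
  nlinarith

/-- **Accuracy of the barrier method.** With `ρ(x) = (1/d)·I + ∑ i, x i • B i` for
Hermitian matrices `B i`, a convex fit function `F` differentiable on the strictly
feasible set `{x : ρ(x) ≻ 0}`, and `t > 0`, if `x_t` is a strictly feasible minimizer
of the barrier objective `f_t(x) = F(x) − t·log (Re det ρ(x))` over the strictly
feasible set, then `F(x_t) ≤ F(x) + t·d` for every feasible point `x` (`ρ(x) ⪰ 0`). -/
theorem barrier_method_accuracy (d m : ℕ)
    (B : Fin m → Matrix (Fin d) (Fin d) ℂ) (hB : ∀ i, (B i).IsHermitian)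
    (ρ : (Fin m → ℝ) → Matrix (Fin d) (Fin d) ℂ)
    (hρ : ρ = fun x => ((d : ℂ))⁻¹ • (1 : Matrix (Fin d) (Fin d) ℂ) +
      ∑ i, ((x i : ℝ) : ℂ) • B i)
    (F : (Fin m → ℝ) → ℝ) (hF : ConvexOn ℝ Set.univ F)
    (hFdiff : ∀ x : Fin m → ℝ, (ρ x).PosDef → DifferentiableAt ℝ F x)
    (t : ℝ) (ht : 0 < t)
    (xt : Fin m → ℝ) (hxt : (ρ xt).PosDef)
    (hmin : ∀ y : Fin m → ℝ, (ρ y).PosDef →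
      F xt - t * Real.log ((ρ xt).det.re) ≤ F y - t * Real.log ((ρ y).det.re)) :
    ∀ x : Fin m → ℝ, (ρ x).PosSemidef → F xt ≤ F x + t * d := by
  intro x hx
  -- affine structure of ρ
  have haff : ∀ s : ℝ, ρ ((1 - s) • xt + s • x)
      = (((1 - s : ℝ)):ℂ) • ρ xt + ((s : ℝ) : ℂ) • ρ x := by
    intro s
    subst hρ
    simp only
    ext i j
    simp only [Matrix.add_apply, Matrix.smul_apply, Matrix.sum_apply, smul_eq_mul,
      Pi.add_apply, Pi.smul_apply]
    push_cast
    have hsum : ∑ k, (((1:ℂ) - (s:ℂ)) * (xt k : ℂ) + (s:ℂ) * (x k : ℂ)) * B k i j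
        = (∑ k, ((1:ℂ) - (s:ℂ)) * ((xt k : ℂ) * B k i j))
          + ∑ k, (s:ℂ) * ((x k : ℂ) * B k i j) := by
      rw [← Finset.sum_add_distrib]
      exact Finset.sum_congr rfl fun k _ => by ring
    rw [hsum, ← Finset.mul_sum, ← Finset.mul_sum]
    ring
  -- key bound for s ∈ (0,1)
  have key : ∀ s : ℝ, s ∈ Set.Ioo (0:ℝ) 1 → F xt - F x ≤ t * d / (1 - s) := by
    intro s hs
    obtain ⟨hs0, hs1⟩ := hs
    have h1s : (0:ℝ) < 1 - s := by linarith
    set y := (1 - s) • xt + s • x with hy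
    have hApd : ((((1 - s : ℝ)):ℂ) • ρ xt).PosDef := myPosDef_smul hxt h1s
    have hCpsd : (((s : ℝ):ℂ) • ρ x).PosSemidef := myPosSemidef_smul hx hs0.le
    have hypd : (ρ y).PosDef := by
      rw [haff s]; exact hApd.add_posSemidef hCpsd
    -- determinant lower bound
    have hdet0 : (0:ℝ) < (ρ xt).det.re := by
      have := hxt.det_pos; rw [Complex.lt_def] at this; simpa using this.1
    have hdetxt : (ρ xt).det = (((ρ xt).det.re : ℝ) : ℂ) := by
      have := hxt.det_pos; rw [Complex.lt_def] at this
      exact Complex.ext (by simp) (by simpa using this.2.symm)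
    have hdetA : ((((1 - s : ℝ)):ℂ) • ρ xt).det.re = (1 - s)^d * (ρ xt).det.re := by
      rw [det_smul, hdetxt, Fintype.card_fin, ← Complex.ofReal_pow, ← Complex.ofReal_mul,
        Complex.ofReal_re]
      simp
    have hdetge : (1 - s)^d * (ρ xt).det.re ≤ (ρ y).det.re := by
      rw [haff s, ← hdetA]
      exact myDet_re_le hApd hCpsd
    have hdetypos : (0:ℝ) < (ρ y).det.re := by
      have := hypd.det_pos; rw [Complex.lt_def] at this; simpa using this.1
    -- log bound
    have hlog : d * Real.log (1 - s) + Real.log ((ρ xt).det.re) ≤ Real.log ((ρ y).det.re) := by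
      have hpos : (0:ℝ) < (1 - s)^d * (ρ xt).det.re := by positivity
      have := Real.log_le_log hpos hdetge
      rwa [Real.log_mul (by positivity) hdet0.ne', Real.log_pow] at this
    -- convexity
    have hconv : F y ≤ (1 - s) * F xt + s * F x :=
      hF.2 (Set.mem_univ xt) (Set.mem_univ x) h1s.le hs0.le (by ring)
    -- minimality
    have hm := hmin y hypd
    -- combine
    have hstep : s * (F xt - F x) ≤ - (t * d * Real.log (1 - s)) := by
      nlinarith [hm, hconv, hlog, ht]
    -- -log(1-s) ≤ s/(1-s)
    have hlog2 : - Real.log (1 - s) ≤ s / (1 - s) := by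
      have h := Real.log_le_sub_one_of_pos (show (0:ℝ) < (1-s)⁻¹ by positivity)
      rw [Real.log_inv] at h
      have : (1 - s)⁻¹ - 1 = s / (1 - s) := by field_simp; ring
      linarith [this ▸ h]
    have htd : (0:ℝ) ≤ t * d := by positivity
    have : s * (F xt - F x) ≤ t * d * (s / (1 - s)) := by
      calc s * (F xt - F x) ≤ t * d * (- Real.log (1 - s)) := by linarith
        _ ≤ t * d * (s / (1 - s)) := by exact mul_le_mul_of_nonneg_left hlog2 htd
    have key2 : s * (F xt - F x) * (1 - s) ≤ t * d * s := by
      have h := mul_le_mul_of_nonneg_right this h1s.le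
      calc s * (F xt - F x) * (1 - s) ≤ t * d * (s / (1 - s)) * (1 - s) := h
        _ = t * d * s := by field_simp
    rw [le_div_iff₀ h1s]
    nlinarith [key2, hs0]
  -- limit s → 0⁺
  have hlim : Filter.Tendsto (fun s : ℝ => t * d / (1 - s)) (nhdsWithin 0 (Set.Ioi 0))
      (nhds (t * d)) := by
    have h : Filter.Tendsto (fun s : ℝ => t * d / (1 - s)) (nhds 0) (nhds (t * d / (1 - 0))) := by
      apply Filter.Tendsto.div tendsto_const_nhds
      · exact (continuous_const.sub continuous_id).tendsto 0
      · norm_num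
    simpa using h.mono_left nhdsWithin_le_nhds
  have hev : ∀ᶠ s in nhdsWithin (0:ℝ) (Set.Ioi 0), F xt - F x ≤ t * d / (1 - s) :=
    Filter.eventually_of_mem (Ioo_mem_nhdsGT_of_mem (by norm_num : (0:ℝ) ∈ Set.Ico 0 1))
      fun s hs => key s hs
  have := ge_of_tendsto hlim hev
  linarith
end

section
/- (Fidelity pretest bound.) For N qubits let P_sym := (1/N!) · ∑_{p ∈ S_N} V(p) be the orthogonal projector onto the symmetric subspace. Let ρ be a density matrix and Z a Hermitian matrix with P_sym − Z positive semidefinite, and set w := Re tr(ρ Z). Then there exists a density matrix σ with V(p) σ V(p)† = σ for all p ∈ S_N such that the fidelity Re tr(√(√ρ · σ · √ρ)) ≥ sign(w) · w², where √ denotes the positive semidefinite square root of a positive semidefinite matrix. -/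
open Matrix ComplexOrder

/-- The permutation (unitary) matrix `V(p)` on the `N`-qubit Hilbert space
`ℂ^(Fin N → Fin 2)`, with `(f, g)` entry `1` if `g = f ∘ p` and `0` otherwise. -/
def permMatrix (N : ℕ) (p : Equiv.Perm (Fin N)) :
    Matrix (Fin N → Fin 2) (Fin N → Fin 2) ℂ :=
  fun f g => if g = f ∘ p then 1 else 0

/-- The positive semidefinite square root, as `Matrix.PosSemidef.sqrt` was defined in Mathlib
(December 2024); the declaration has since been removed from Mathlib. -/
noncomputable def Matrix.PosSemidef.sqrt {n 𝕜 : Type*} [Fintype n] [DecidableEq n] [RCLike 𝕜]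
    {A : Matrix n n 𝕜} (hA : A.PosSemidef) : Matrix n n 𝕜 :=
  hA.1.eigenvectorUnitary.1 * diagonal ((↑) ∘ (√·) ∘ hA.1.eigenvalues) *
    (star hA.1.eigenvectorUnitary : Matrix n n 𝕜)

/-- The projector onto the symmetric subspace, `P_sym = (1/N!) ∑_{p ∈ S_N} V(p)`. -/
noncomputable def symProj (N : ℕ) : Matrix (Fin N → Fin 2) (Fin N → Fin 2) ℂ :=
  ((N.factorial : ℂ))⁻¹ • ∑ p : Equiv.Perm (Fin N), permMatrix N p

section sqrtPort
open scoped MatrixOrder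

lemma Matrix.PosSemidef.sqrt_eq_cfcSqrt {n : Type*} [Fintype n] [DecidableEq n]
    {A : Matrix n n ℂ} (hA : A.PosSemidef) : hA.sqrt = CFC.sqrt A := by
  have hA0 : (0 : Matrix n n ℂ) ≤ A := nonneg_iff_posSemidef.2 hA
  rw [CFC.sqrt_eq_cfc, cfc_nnreal_eq_real _ A, hA.1.cfc_eq, IsHermitian.cfc,
    Unitary.conjStarAlgAut_apply, Matrix.PosSemidef.sqrt]
  congr 3
  funext i
  simp [Real.coe_toNNReal', max_eq_left (hA.eigenvalues_nonneg i)]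

lemma Matrix.PosSemidef.posSemidef_sqrt {n : Type*} [Fintype n] [DecidableEq n]
    {A : Matrix n n ℂ} (hA : A.PosSemidef) : hA.sqrt.PosSemidef := by
  rw [hA.sqrt_eq_cfcSqrt]
  exact nonneg_iff_posSemidef.1 (CFC.sqrt_nonneg A)

lemma Matrix.PosSemidef.sqrt_mul_self {n : Type*} [Fintype n] [DecidableEq n]
    {A : Matrix n n ℂ} (hA : A.PosSemidef) : hA.sqrt * hA.sqrt = A := by
  have hA0 : (0 : Matrix n n ℂ) ≤ A := nonneg_iff_posSemidef.2 hA
  rw [hA.sqrt_eq_cfcSqrt]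
  exact CFC.sqrt_mul_sqrt_self A

lemma Matrix.PosSemidef.eq_sqrt_of_sq_eq {n : Type*} [Fintype n] [DecidableEq n]
    {A B : Matrix n n ℂ} (hA : A.PosSemidef) (hB : B.PosSemidef) (hAB : A ^ 2 = B) :
    A = hB.sqrt := by
  have hA0 : (0 : Matrix n n ℂ) ≤ A := nonneg_iff_posSemidef.2 hA
  rw [hB.sqrt_eq_cfcSqrt]
  exact (CFC.sqrt_unique (by rw [← pow_two, hAB]) hA0).symm

end sqrtPort

lemma permMatrix_mul (N : ℕ) (p q : Equiv.Perm (Fin N)) :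
    permMatrix N p * permMatrix N q = permMatrix N (p * q) := by
  ext f g
  simp only [mul_apply, permMatrix, ite_mul, one_mul, zero_mul]
  rw [Finset.sum_ite_eq' Finset.univ (f ∘ ⇑p)]
  simp [Function.comp_assoc, Equiv.Perm.coe_mul]
  congr

lemma permMatrix_one (N : ℕ) : permMatrix N 1 = 1 := by
  ext f g
  simp [permMatrix, one_apply, eq_comm]

lemma permMatrix_conjTranspose (N : ℕ) (p : Equiv.Perm (Fin N)) :
    (permMatrix N p)ᴴ = permMatrix N p⁻¹ := by
  ext f g
  simp only [conjTranspose_apply, permMatrix]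
  have h : (f = g ∘ ⇑p) ↔ (g = f ∘ ⇑p⁻¹) := by
    constructor <;> rintro rfl <;> funext i <;> simp
  rw [if_congr h rfl rfl]
  split <;> simp

lemma permMatrix_mul_symProj (N : ℕ) (p : Equiv.Perm (Fin N)) :
    permMatrix N p * symProj N = symProj N := by
  unfold symProj
  rw [Matrix.mul_smul, Finset.mul_sum]
  congr 1
  simp_rw [permMatrix_mul]
  exact Fintype.sum_equiv (Equiv.mulLeft p) _ _ (fun q => rfl)

lemma symProj_isHermitian (N : ℕ) : (symProj N).IsHermitian := by
  unfold Matrix.IsHermitian symProj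
  rw [conjTranspose_smul, conjTranspose_sum]
  simp_rw [permMatrix_conjTranspose]
  congr 1
  · simp [star_inv₀]
  · exact Fintype.sum_equiv (Equiv.inv _) _ _ (fun q => rfl)

lemma symProj_mul_self (N : ℕ) : symProj N * symProj N = symProj N := by
  nth_rewrite 1 [symProj]
  rw [Matrix.smul_mul, Finset.sum_mul]
  simp_rw [permMatrix_mul_symProj, Finset.sum_const, Finset.card_univ, Fintype.card_perm,
    Fintype.card_fin]
  rw [← Nat.cast_smul_eq_nsmul ℂ, smul_smul,
    inv_mul_cancel₀ (Nat.cast_ne_zero.2 N.factorial_ne_zero), one_smul]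

lemma symProj_posSemidef (N : ℕ) : (symProj N).PosSemidef := by
  have h := Matrix.posSemidef_self_mul_conjTranspose (symProj N)
  rwa [(symProj_isHermitian N).eq, symProj_mul_self] at h

lemma one_sub_symProj_posSemidef (N : ℕ) : (1 - symProj N).PosSemidef := by
  have h := Matrix.posSemidef_self_mul_conjTranspose (1 - symProj N)
  have he : (1 - symProj N)ᴴ = 1 - symProj N := by
    rw [conjTranspose_sub, conjTranspose_one, (symProj_isHermitian N).eq]
  rw [he] at h
  have hmul : (1 - symProj N) * (1 - symProj N) = 1 - symProj N := by
    simp only [sub_mul, mul_sub, mul_one, one_mul, symProj_mul_self]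
    abel
  rwa [hmul] at h

lemma posSemidef_trace_nonneg {n : Type*} [Fintype n] [DecidableEq n] {A : Matrix n n ℂ}
    (hA : A.PosSemidef) : 0 ≤ A.trace := by
  rw [Matrix.trace]
  refine Finset.sum_nonneg fun i _ => ?_
  exact hA.diag_nonneg

lemma posSemidef_smul' {n : Type*} [Fintype n] {A : Matrix n n ℂ}
    (hA : A.PosSemidef) {c : ℝ} (hc : 0 ≤ c) : ((c : ℂ) • A).PosSemidef := by
  constructor
  · unfold Matrix.IsHermitian
    rw [conjTranspose_smul, hA.1.eq]
    congr 1
    simp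
  · exact (hA.smul (a := (c : ℂ)) (by exact_mod_cast Complex.zero_le_real.2 hc)).2

/-- trace of product of two PSD matrices is nonneg. -/
lemma trace_mul_posSemidef_nonneg {n : Type*} [Fintype n] [DecidableEq n]
    {A B : Matrix n n ℂ} (hA : A.PosSemidef) (hB : B.PosSemidef) :
    0 ≤ (A * B).trace := by
  have h1 : (hA.sqrt * B * hA.sqrt).PosSemidef := by
    have h := hB.mul_mul_conjTranspose_same hA.sqrt
    rwa [hA.posSemidef_sqrt.1.eq] at h
  have h2 : (hA.sqrt * B * hA.sqrt).trace = (A * B).trace := by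
    rw [Matrix.trace_mul_cycle, hA.sqrt_mul_self]
  rw [← h2]
  exact posSemidef_trace_nonneg h1

set_option maxHeartbeats 1000000 in
/-- **Fidelity pretest bound.** If `ρ` is a density matrix and `Z` is a Hermitian
matrix with `Z ≤ P_sym`, then with `w := Re tr(ρ Z)` there exists a permutationally
invariant density matrix `σ` whose fidelity with `ρ` satisfies
`F(ρ, σ) = Re tr √(√ρ σ √ρ) ≥ sign(w) · w²`. -/
theorem fidelity_pretest_bound (N : ℕ)
    (ρ Z : Matrix (Fin N → Fin 2) (Fin N → Fin 2) ℂ)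
    (hρ : ρ.PosSemidef) (hρtr : ρ.trace = 1)
    (hZ : Z.IsHermitian) (hZle : (symProj N - Z).PosSemidef)
    (w : ℝ) (hw : w = ((ρ * Z).trace).re) :
    ∃ (σ : Matrix (Fin N → Fin 2) (Fin N → Fin 2) ℂ) (hσ : σ.PosSemidef)
      (hfid : (hρ.sqrt * σ * hρ.sqrt).PosSemidef),
      σ.trace = 1 ∧
      (∀ p : Equiv.Perm (Fin N), permMatrix N p * σ * (permMatrix N p)ᴴ = σ) ∧
      Real.sign w * w ^ 2 ≤ (hfid.sqrt).trace.re := by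
  classical
  set P := symProj N with hP
  have hPh := symProj_isHermitian N
  have hPP := symProj_mul_self N
  have hPpsd := symProj_posSemidef N
  set t : ℝ := ((ρ * P).trace).re with ht
  have hwt : w ≤ t := by
    have h := trace_mul_posSemidef_nonneg hρ hZle
    have heq : (ρ * (P - Z)).trace = (ρ * P).trace - (ρ * Z).trace := by
      rw [Matrix.mul_sub, Matrix.trace_sub]
    rw [heq] at h
    have h2 := (Complex.nonneg_iff.1 h).1
    rw [Complex.sub_re] at h2
    rw [hw, ht]; linarith
  have ht1 : t ≤ 1 := by
    have h := trace_mul_posSemidef_nonneg hρ (one_sub_symProj_posSemidef N)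
    have heq : (ρ * (1 - P)).trace = 1 - (ρ * P).trace := by
      rw [Matrix.mul_sub, Matrix.trace_sub, Matrix.mul_one, hρtr]
    rw [heq] at h
    have h2 := (Complex.nonneg_iff.1 h).1
    simp only [Complex.sub_re, Complex.one_re] at h2
    rw [ht]; linarith
  rcases le_or_gt w 0 with hw0 | hw0
  · -- trivial case: maximally mixed state
    set c : ℝ := ((Fintype.card (Fin N → Fin 2) : ℝ))⁻¹ with hc
    have hcard : (0:ℝ) < (Fintype.card (Fin N → Fin 2) : ℝ) := by
      exact_mod_cast Fintype.card_pos
    have hσpsd : (((c : ℂ)) • (1 : Matrix (Fin N → Fin 2) (Fin N → Fin 2) ℂ)).PosSemidef :=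
      posSemidef_smul' Matrix.PosSemidef.one (by positivity)
    have hfid : (hρ.sqrt * ((c : ℂ) • 1) * hρ.sqrt).PosSemidef := by
      have h := hσpsd.mul_mul_conjTranspose_same hρ.sqrt
      rwa [hρ.posSemidef_sqrt.1.eq] at h
    refine ⟨(c : ℂ) • 1, hσpsd, hfid, ?_, ?_, ?_⟩
    · rw [Matrix.trace_smul, Matrix.trace_one, smul_eq_mul, hc]
      push_cast
      field_simp
    · intro p
      rw [Matrix.mul_smul, Matrix.mul_one, Matrix.smul_mul, permMatrix_conjTranspose,
        permMatrix_mul]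
      have hpp : p * p⁻¹ = 1 := by group
      rw [hpp, permMatrix_one]
    · have hs : Real.sign w * w ^ 2 ≤ 0 := by
        rcases lt_or_eq_of_le hw0 with h | h
        · rw [Real.sign_of_neg h]; nlinarith
        · simp [h]
      refine hs.trans ?_
      have h := posSemidef_trace_nonneg hfid.posSemidef_sqrt
      exact (Complex.nonneg_iff.1 h).1
  · -- main case: σ = P ρ P / t
    have htpos : 0 < t := lt_of_lt_of_le hw0 hwt
    set B : Matrix (Fin N → Fin 2) (Fin N → Fin 2) ℂ := hρ.sqrt * P * hρ.sqrt with hB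
    have hBpsd : B.PosSemidef := by
      have h := hPpsd.mul_mul_conjTranspose_same hρ.sqrt
      rwa [hρ.posSemidef_sqrt.1.eq] at h
    have hBtrρP : B.trace = (ρ * P).trace := by
      rw [hB, Matrix.trace_mul_cycle, hρ.sqrt_mul_self]
    have hBtr : B.trace = (t : ℂ) := by
      have h2 := posSemidef_trace_nonneg hBpsd
      have him := (Complex.nonneg_iff.1 h2).2
      apply Complex.ext
      · rw [Complex.ofReal_re, hBtrρP, ht]
      · rw [Complex.ofReal_im]; exact him.symm
    have hVP : ∀ p : Equiv.Perm (Fin N), permMatrix N p * P = P := permMatrix_mul_symProj N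
    set σ : Matrix (Fin N → Fin 2) (Fin N → Fin 2) ℂ := ((t : ℂ))⁻¹ • (P * ρ * P) with hσdef
    have hPρP : (P * ρ * P).PosSemidef := by
      have h := hρ.mul_mul_conjTranspose_same P
      rwa [hPh.eq] at h
    have hσpsd : σ.PosSemidef := by
      have hcast : ((t : ℂ))⁻¹ = ((t⁻¹ : ℝ) : ℂ) := by push_cast; ring
      rw [hσdef, hcast]
      exact posSemidef_smul' hPρP (by positivity)
    set s : ℝ := Real.sqrt t with hs
    have hspos : 0 < s := Real.sqrt_pos.2 htpos
    have hssq : s ^ 2 = t := Real.sq_sqrt htpos.le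
    set M : Matrix (Fin N → Fin 2) (Fin N → Fin 2) ℂ := ((s : ℂ))⁻¹ • B with hM
    have hMpsd : M.PosSemidef := by
      have hcast : ((s : ℂ))⁻¹ = ((s⁻¹ : ℝ) : ℂ) := by push_cast; ring
      rw [hM, hcast]
      exact posSemidef_smul' hBpsd (by positivity)
    have hsc : ((s : ℂ))⁻¹ * ((s : ℂ))⁻¹ = ((t : ℂ))⁻¹ := by
      rw [← mul_inv, ← Complex.ofReal_mul, Real.mul_self_sqrt htpos.le]
    have hBB : B * B = hρ.sqrt * (P * ρ * P) * hρ.sqrt := by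
      rw [hB]
      have hroot : hρ.sqrt * hρ.sqrt = ρ := hρ.sqrt_mul_self
      calc hρ.sqrt * P * hρ.sqrt * (hρ.sqrt * P * hρ.sqrt)
          = hρ.sqrt * P * (hρ.sqrt * hρ.sqrt) * P * hρ.sqrt := by
            simp only [Matrix.mul_assoc]
        _ = hρ.sqrt * (P * ρ * P) * hρ.sqrt := by
            rw [hroot]; simp only [Matrix.mul_assoc]
    have hM2 : M ^ 2 = hρ.sqrt * σ * hρ.sqrt := by
      rw [pow_two, hM, smul_mul_smul_comm, hsc, hBB, hσdef, Matrix.mul_smul, Matrix.smul_mul]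
    have hfid : (hρ.sqrt * σ * hρ.sqrt).PosSemidef := by
      rw [← hM2]; exact hMpsd.pow 2
    refine ⟨σ, hσpsd, hfid, ?_, ?_, ?_⟩
    · rw [hσdef, Matrix.trace_smul, Matrix.trace_mul_cycle, hPP, smul_eq_mul]
      rw [Matrix.trace_mul_comm P ρ, ← hBtrρP, hBtr, inv_mul_cancel₀]
      exact_mod_cast htpos.ne'
    · intro p
      have hPV : P * (permMatrix N p)ᴴ = P := by
        have h := congrArg conjTranspose (hVP p)
        rwa [conjTranspose_mul, hPh.eq] at h
      have key : permMatrix N p * (P * ρ * P) * (permMatrix N p)ᴴ = P * ρ * P :=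
        calc permMatrix N p * (P * ρ * P) * (permMatrix N p)ᴴ
            = (permMatrix N p * P) * ρ * (P * (permMatrix N p)ᴴ) := by
              simp only [Matrix.mul_assoc]
          _ = P * ρ * P := by rw [hVP p, hPV]
      rw [hσdef, Matrix.mul_smul, Matrix.smul_mul, key]
    · have hsqrt : hfid.sqrt = M := (hMpsd.eq_sqrt_of_sq_eq hfid hM2).symm
      rw [hsqrt, hM, Matrix.trace_smul, hBtr, smul_eq_mul]
      have hcast : ((s : ℂ))⁻¹ * (t : ℂ) = ((t / s : ℝ) : ℂ) := by push_cast; ring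
      rw [hcast, Complex.ofReal_re, Real.sign_of_pos hw0, one_mul]
      rw [hs, Real.div_sqrt]
      have hs1 : s ≤ 1 := by nlinarith [hssq, hspos]
      have hw1 : w ≤ 1 := le_trans hwt ht1
      have h1 : w ^ 2 ≤ w := by nlinarith
      have h2 : w ≤ s := by nlinarith [hssq]
      calc w ^ 2 ≤ w := h1
        _ ≤ s := h2
        _ = √t := hs
end
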